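/- arXiv:2602.08630 — 2 statements merged into one kernel-verified Lean document; each statement's English description precedes it below -/
import Mathlib

section
/- If a Boolean function f : {0,1}^n → {0,1} depends on all its variables, then its Debate Query Complexity satisfies DQC(f) ≥ log₂(n). -/
/-!
A verifier tree has to query every input variable that `f` depends on: if it never reads `x i`,
then flipping `x i` leaves the whole game unchanged, yet it flips the winner, and the two
provers cannot both have a winning strategy. A tree of depth `ℓ` queries fewer than `2 ^ ℓ`
variables, so `n < 2 ^ DQC(f)`.
-/

/-- A deterministic decision tree over `m` Boolean variables. -/
inductive DT (m : ℕ) : Type where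
  | leaf : Bool → DT m
  | node : Fin m → DT m → DT m → DT m

/-- Evaluation of a decision tree on an input. -/
def DT.eval {m : ℕ} : DT m → (Fin m → Bool) → Bool
  | .leaf b, _ => b
  | .node i t0 t1, x => if x i then t1.eval x else t0.eval x

/-- Depth of a decision tree: maximum number of queries on a root-to-leaf path. -/
def DT.depth {m : ℕ} : DT m → ℕ
  | .leaf _ => 0
  | .node _ t0 t1 => max t0.depth t1.depth + 1

/-- The set of variables queried anywhere in the tree. -/
def DT.vars {m : ℕ} : DT m → Finset (Fin m)
  | .leaf _ => ∅
  | .node i t0 t1 => insert i (t0.vars ∪ t1.vars)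

/-- Number of internal (query) nodes of a decision tree. -/
def DT.numNodes {m : ℕ} : DT m → ℕ
  | .leaf _ => 0
  | .node _ t0 t1 => t0.numNodes + t1.numNodes + 1

/-- `f` depends on variable `i` if flipping bit `i` can change the value of `f`. -/
def DependsOnVar {m : ℕ} (f : (Fin m → Bool) → Bool) (i : Fin m) : Prop :=
  ∃ x : Fin m → Bool, f x ≠ f (Function.update x i (!x i))

/-- The winning condition for Prover 1: `∀ α₁ ∃ β₁ … ∀ α_k ∃ β_k, V(α,β) = true`. -/
def AWins : ℕ → (List Bool → Bool) → Prop
  | 0, V => V [] = true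
  | k + 1, V => ∀ a : Bool, ∃ b : Bool, AWins k (fun t => V (a :: b :: t))

/-- The winning condition for Prover 0: `∃ α₁ ∀ β₁ … ∃ α_k ∀ β_k, V(α,β) = false`. -/
def BWins : ℕ → (List Bool → Bool) → Prop
  | 0, V => V [] = false
  | k + 1, V => ∃ a : Bool, ∀ b : Bool, BWins k (fun t => V (a :: b :: t))

/-- Assemble the input `x` together with the `2k` transcript bits
`α₁, β₁, …, α_k, β_k` into a single input of length `n + 2k`. -/
def assemble (n k : ℕ) (x : Fin n → Bool) (t : List Bool) : Fin (n + 2 * k) → Bool :=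
  fun j => if h : (j : ℕ) < n then x ⟨j, h⟩ else t.getD ((j : ℕ) - n) false

/-- A `(k,ℓ)`-debate for `f`: a verifier given by a decision tree of depth at most `ℓ`
on the input bits and the `2k` transcript bits, satisfying the alternating-quantifier
winning conditions. -/
def IsDebate (n k ℓ : ℕ) (f : (Fin n → Bool) → Bool) : Prop :=
  ∃ T : DT (n + 2 * k), T.depth ≤ ℓ ∧
    ∀ x : Fin n → Bool,
      (f x = true → AWins k (fun t => T.eval (assemble n k x t))) ∧
      (f x = false → BWins k (fun t => T.eval (assemble n k x t)))

/-- Debate query complexity: the least verifier depth `ℓ` over all `(k,ℓ)`-debates for `f`. -/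
noncomputable def DQC (n : ℕ) (f : (Fin n → Bool) → Bool) : ℕ :=
  sInf {ℓ | ∃ k, IsDebate n k ℓ f}

namespace DT

variable {m : ℕ}

theorem eval_congr (T : DT m) {x y : Fin m → Bool} (h : ∀ j ∈ T.vars, x j = y j) :
    T.eval x = T.eval y := by
  induction T with
  | leaf b => rfl
  | node i t0 t1 ih0 ih1 =>
    simp only [vars, Finset.mem_insert, Finset.mem_union] at h
    simp only [eval, h i (Or.inl rfl)]
    split
    · exact ih1 fun j hj => h j (Or.inr (Or.inr hj))
    · exact ih0 fun j hj => h j (Or.inr (Or.inl hj))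

theorem card_vars_lt_two_pow_depth (T : DT m) : T.vars.card < 2 ^ T.depth := by
  induction T with
  | leaf b => simp [vars, depth]
  | node i t0 t1 ih0 ih1 =>
    have hcard : (insert i (t0.vars ∪ t1.vars)).card ≤ t0.vars.card + t1.vars.card + 1 :=
      (Finset.card_insert_le _ _).trans (Nat.add_le_add_right (Finset.card_union_le _ _) 1)
    have h0 : 2 ^ t0.depth ≤ 2 ^ max t0.depth t1.depth :=
      Nat.pow_le_pow_right two_pos (le_max_left _ _)
    have h1 : 2 ^ t1.depth ≤ 2 ^ max t0.depth t1.depth :=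
      Nat.pow_le_pow_right two_pos (le_max_right _ _)
    simp only [vars, depth, pow_succ]
    omega

def complete : List (Fin m) → ((Fin m → Bool) → Bool) → DT m
  | [], g => .leaf (g fun _ => false)
  | i :: l, g => .node i (complete l fun x => g (Function.update x i false))
      (complete l fun x => g (Function.update x i true))

theorem depth_complete (l : List (Fin m)) (g : (Fin m → Bool) → Bool) :
    (complete l g).depth = l.length := by
  induction l generalizing g with
  | nil => rfl
  | cons i l ih => simp [complete, depth, ih]

theorem eval_complete (l : List (Fin m)) (g : (Fin m → Bool) → Bool) (x : Fin m → Bool) :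
    (complete l g).eval x = g (fun j => if j ∈ l then x j else false) := by
  induction l generalizing g with
  | nil => simp [complete, eval]
  | cons i l ih =>
    have hupdate : Function.update (fun j => if j ∈ l then x j else false) i (x i)
        = fun j => if j ∈ i :: l then x j else false := by
      funext j
      by_cases hj : j = i
      · subst hj; simp
      · simp [hj]
    rw [← hupdate]
    cases hx : x i <;> simp [complete, eval, hx, ih]

theorem eval_complete_finRange (g : (Fin m → Bool) → Bool) (x : Fin m → Bool) :
    (complete (List.finRange m) g).eval x = g x := by
  simp [eval_complete]

end DT

theorem AWins.not_bWins {k : ℕ} {V : List Bool → Bool} (hA : AWins k V) : ¬ BWins k V := by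
  induction k generalizing V with
  | zero => simp_all [AWins, BWins]
  | succ k ih =>
    rintro ⟨a, hB⟩
    obtain ⟨b, hA⟩ := hA a
    exact ih hA (hB b)

theorem assemble_castAdd (n k : ℕ) (x : Fin n → Bool) (t : List Bool) (i : Fin n) :
    assemble n k x t (Fin.castAdd (2 * k) i) = x i := by
  simp [assemble]

theorem assemble_update_of_ne {n k : ℕ} (x : Fin n → Bool) (t : List Bool) {i : Fin n}
    (b : Bool) {j : Fin (n + 2 * k)} (hj : j ≠ Fin.castAdd (2 * k) i) :
    assemble n k (Function.update x i b) t j = assemble n k x t j := by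
  unfold assemble
  split
  · refine Function.update_of_ne (fun h => hj (Fin.ext ?_)) _ _
    simpa using congrArg Fin.val h
  · rfl

theorem isDebate_zero (n : ℕ) (f : (Fin n → Bool) → Bool) : IsDebate n 0 n f := by
  let T := DT.complete (List.finRange (n + 2 * 0)) fun y => f (fun i => y (Fin.castAdd _ i))
  have heval (x : Fin n → Bool) : T.eval (assemble n 0 x []) = f x := by
    simp only [T, DT.eval_complete_finRange, assemble_castAdd]
  exact ⟨T, by simp [T, DT.depth_complete], fun x => ⟨(heval x).trans, (heval x).trans⟩⟩

section Verifier

variable {n k : ℕ} {f : (Fin n → Bool) → Bool} {T : DT (n + 2 * k)}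

def IsVerifier (k : ℕ) (f : (Fin n → Bool) → Bool) (T : DT (n + 2 * k)) : Prop :=
  ∀ x : Fin n → Bool,
    (f x = true → AWins k (fun t => T.eval (assemble n k x t))) ∧
    (f x = false → BWins k (fun t => T.eval (assemble n k x t)))

theorem IsVerifier.eq_of_eval_eq (hT : IsVerifier k f T) {x y : Fin n → Bool}
    (h : ∀ t, T.eval (assemble n k x t) = T.eval (assemble n k y t)) : f x = f y := by
  have hxy : (fun t => T.eval (assemble n k x t)) = fun t => T.eval (assemble n k y t) := funext h
  cases hx : f x <;> cases hy : f y
  · rfl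
  · exact (((hT y).1 hy).not_bWins (hxy ▸ (hT x).2 hx)).elim
  · exact (((hT x).1 hx).not_bWins (hxy ▸ (hT y).2 hy)).elim
  · rfl

theorem IsVerifier.castAdd_mem_vars (hT : IsVerifier k f T) {i : Fin n}
    (hi : DependsOnVar f i) : Fin.castAdd (2 * k) i ∈ T.vars := by
  obtain ⟨x, hx⟩ := hi
  by_contra hnot
  refine hx (hT.eq_of_eval_eq fun t => T.eval_congr fun j hj => ?_)
  exact (assemble_update_of_ne x t _ fun h => hnot (h ▸ hj)).symm

theorem IsVerifier.lt_two_pow_depth (hT : IsVerifier k f T) (hdep : ∀ i, DependsOnVar f i) :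
    n < 2 ^ T.depth := by
  have hcard : n ≤ T.vars.card := by
    simpa using Finset.card_le_card_of_injOn (s := Finset.univ) (Fin.castAdd (2 * k))
      (fun i _ => hT.castAdd_mem_vars (hdep i)) (Fin.castAdd_injective _ _).injOn
  exact hcard.trans_lt T.card_vars_lt_two_pow_depth

end Verifier

theorem IsDebate.lt_two_pow {n k ℓ : ℕ} {f : (Fin n → Bool) → Bool} (hf : IsDebate n k ℓ f)
    (hdep : ∀ i, DependsOnVar f i) : n < 2 ^ ℓ := by
  obtain ⟨T, hdepth, hT⟩ := hf
  exact (IsVerifier.lt_two_pow_depth hT hdep).trans_le (Nat.pow_le_pow_right two_pos hdepth)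

theorem Real.logb_two_natCast_le_of_lt_two_pow {n d : ℕ} (h : n < 2 ^ d) :
    Real.logb 2 n ≤ d := by
  rcases Nat.eq_zero_or_pos n with rfl | hpos
  · simp
  · calc Real.logb 2 n ≤ Real.logb 2 ((2 : ℝ) ^ d) :=
          Real.logb_le_logb_of_le one_lt_two (by exact_mod_cast hpos) (by exact_mod_cast h.le)
      _ = d := by simp [Real.logb_pow]

/-- If `f` depends on all its variables then `DQC(f) ≥ log₂ n`. -/
theorem stmt_2 (n : ℕ) (f : (Fin n → Bool) → Bool)
    (hdep : ∀ i : Fin n, DependsOnVar f i) :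
    Real.logb 2 n ≤ (DQC n f : ℝ) := by
  obtain ⟨k, hdebate⟩ : ∃ k, IsDebate n k (DQC n f) f :=
    Nat.sInf_mem (s := {ℓ | ∃ k, IsDebate n k ℓ f}) ⟨n, 0, isDebate_zero n f⟩
  exact Real.logb_two_natCast_le_of_lt_two_pow (hdebate.lt_two_pow hdep)
end

section
/- For every Boolean function f computable by a leveled fan-in-2 AND/OR circuit of depth d, DQC(f) ≤ d + 1. -/
/-- `f` depends on variable `i` if flipping bit `i` can change the value of `f`. -/
def BoolDependsOn {m : ℕ} (f : (Fin m → Bool) → Bool) (i : Fin m) : Prop :=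
  ∃ x : Fin m → Bool, f x ≠ f (Function.update x i (!x i))

/-- A fan-in-2 AND/OR formula with literals (variables or their negations) at the
leaves; a leveled fan-in-2 AND/OR circuit of depth `d` unfolds into such a
formula of depth `d`. -/
inductive Formula (n : ℕ) : Type where
  | lit : Fin n → Bool → Formula n
  | and : Formula n → Formula n → Formula n
  | or : Formula n → Formula n → Formula n

/-- Evaluation of a formula; `lit i true` is the literal `x_i`, `lit i false` is `¬x_i`. -/
def Formula.eval {n : ℕ} : Formula n → (Fin n → Bool) → Bool
  | .lit i b, x => if b then x i else !x i
  | .and F G, x => F.eval x && G.eval x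
  | .or F G, x => F.eval x || G.eval x

/-- Depth of a formula (number of gate levels above the literals). -/
def Formula.depth {n : ℕ} : Formula n → ℕ
  | .lit _ _ => 0
  | .and F G => max F.depth G.depth + 1
  | .or F G => max F.depth G.depth + 1


/-!
The debate is the Karchmer–Wigderson game on a formula for `f`. Each round descends one level:
at an AND gate Prover 0 (the bit `α`) picks the child, at an OR gate Prover 1 (the bit `β`) does.
The prover defending the true value `f x` can always move to a child with that same value, so the
literal reached at the bottom evaluates to `f x`. The verifier follows the transcript down the
formula, reading one transcript bit per level, and queries that literal: `d + 1` queries in all.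
-/

theorem AWins_const_iff (k : ℕ) (c : Bool) : AWins k (fun _ => c) ↔ c = true := by
  induction k with
  | zero => rfl
  | succ k ih => simp [AWins, ih]

theorem BWins_const_iff (k : ℕ) (c : Bool) : BWins k (fun _ => c) ↔ c = false := by
  induction k with
  | zero => rfl
  | succ k ih => simp [BWins, ih]

namespace Formula

variable {n : ℕ}

/-- The literal reached when the transcript `t = α₁ :: β₁ :: …` is followed down the formula,
evaluated at `x`. -/
def outcome : Formula n → (Fin n → Bool) → List Bool → Bool
  | .lit i b, x, _ => (lit i b).eval x
  | .and F G, x, t => if t.getD 0 false then G.outcome x (t.drop 2) else F.outcome x (t.drop 2)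
  | .or F G, x, t => if t.getD 1 false then G.outcome x (t.drop 2) else F.outcome x (t.drop 2)

@[simp]
theorem outcome_and_cons (F G : Formula n) (x : Fin n → Bool) (a b : Bool) (t : List Bool) :
    (and F G).outcome x (a :: b :: t) = if a then G.outcome x t else F.outcome x t := by
  simp [outcome]

@[simp]
theorem outcome_or_cons (F G : Formula n) (x : Fin n → Bool) (a b : Bool) (t : List Bool) :
    (or F G).outcome x (a :: b :: t) = if b then G.outcome x t else F.outcome x t := by
  simp [outcome]

theorem AWins_outcome {F : Formula n} {k : ℕ} {x : Fin n → Bool} (hk : F.depth ≤ k)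
    (hF : F.eval x = true) : AWins k (F.outcome x) := by
  induction F generalizing k with
  | lit i b => exact (AWins_const_iff k _).2 hF
  | and F G ihF ihG =>
    simp only [depth] at hk
    obtain ⟨k, rfl⟩ : ∃ k', k = k' + 1 := ⟨k - 1, by omega⟩
    simp only [eval, Bool.and_eq_true] at hF
    refine fun a => ⟨true, ?_⟩
    cases a
    · simpa using ihF (by omega) hF.1
    · simpa using ihG (by omega) hF.2
  | or F G ihF ihG =>
    simp only [depth] at hk
    obtain ⟨k, rfl⟩ : ∃ k', k = k' + 1 := ⟨k - 1, by omega⟩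
    refine fun a => ⟨G.eval x, ?_⟩
    cases hG : G.eval x
    · simpa using ihF (by omega) (by simpa [eval, hG] using hF)
    · simpa using ihG (by omega) hG

theorem BWins_outcome {F : Formula n} {k : ℕ} {x : Fin n → Bool} (hk : F.depth ≤ k)
    (hF : F.eval x = false) : BWins k (F.outcome x) := by
  induction F generalizing k with
  | lit i b => exact (BWins_const_iff k _).2 hF
  | and F G ihF ihG =>
    simp only [depth] at hk
    obtain ⟨k, rfl⟩ : ∃ k', k = k' + 1 := ⟨k - 1, by omega⟩
    refine ⟨F.eval x, fun b => ?_⟩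
    cases hF' : F.eval x
    · simpa using ihF (by omega) hF'
    · simpa using ihG (by omega) (by simpa [eval, hF'] using hF)
  | or F G ihF ihG =>
    simp only [depth] at hk
    obtain ⟨k, rfl⟩ : ∃ k', k = k' + 1 := ⟨k - 1, by omega⟩
    simp only [eval, Bool.or_eq_false_iff] at hF
    refine ⟨true, fun b => ?_⟩
    cases b
    · simpa using ihF (by omega) hF.1
    · simpa using ihG (by omega) hF.2

/-- The verifier for the debate on `F`, started at round `j`. The `leaf false` branches are
never reached when `j + F.depth < k` (see `eval_verifier`). -/
def verifier (k : ℕ) : Formula n → ℕ → DT (n + 2 * k)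
  | .lit i b, _ => .node (Fin.castAdd _ i) (.leaf !b) (.leaf b)
  | .and F G, j =>
    if h : n + 2 * j < n + 2 * k then .node ⟨_, h⟩ (F.verifier k (j + 1)) (G.verifier k (j + 1))
    else .leaf false
  | .or F G, j =>
    if h : n + (2 * j + 1) < n + 2 * k then
      .node ⟨_, h⟩ (F.verifier k (j + 1)) (G.verifier k (j + 1))
    else .leaf false

theorem depth_verifier (k : ℕ) (F : Formula n) (j : ℕ) :
    (F.verifier k j).depth ≤ F.depth + 1 := by
  induction F generalizing j with
  | lit i b => simp [verifier, DT.depth]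
  | and F G ihF ihG =>
    simp only [verifier, depth]
    split
    · have := ihF (j + 1); have := ihG (j + 1); simp only [DT.depth]; omega
    · simp [DT.depth]
  | or F G ihF ihG =>
    simp only [verifier, depth]
    split
    · have := ihF (j + 1); have := ihG (j + 1); simp only [DT.depth]; omega
    · simp [DT.depth]

theorem assemble_transcript {k : ℕ} (x : Fin n → Bool) (t : List Bool) {p : ℕ}
    (h : n + p < n + 2 * k) : assemble n k x t ⟨n + p, h⟩ = t.getD p false := by
  simp [assemble]

theorem eval_verifier {k : ℕ} (F : Formula n) (x : Fin n → Bool) (t : List Bool) {j : ℕ}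
    (hj : j + F.depth < k) :
    (F.verifier k j).eval (assemble n k x t) = F.outcome x (t.drop (2 * j)) := by
  induction F generalizing j with
  | lit i b => cases b <;> simp [verifier, outcome, DT.eval, eval, assemble]
  | and F G ihF ihG =>
    simp only [depth] at hj
    simp only [verifier, dif_pos (show n + 2 * j < n + 2 * k by omega), DT.eval,
      assemble_transcript, outcome, ihF (j := j + 1) (by omega), ihG (j := j + 1) (by omega)]
    simp [List.getD_eq_getElem?_getD, List.drop_drop, Nat.mul_add]
  | or F G ihF ihG =>
    simp only [depth] at hj
    simp only [verifier, dif_pos (show n + (2 * j + 1) < n + 2 * k by omega), DT.eval,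
      assemble_transcript, outcome, ihF (j := j + 1) (by omega), ihG (j := j + 1) (by omega)]
    simp [List.getD_eq_getElem?_getD, List.drop_drop, Nat.mul_add]

end Formula

/-- If `f` is computable by a (leveled) fan-in-2 AND/OR circuit of depth `d`, then
`DQC(f) ≤ d + 1`. -/
theorem stmt_7 (n d : ℕ) (f : (Fin n → Bool) → Bool)
    (h : ∃ F : Formula n, F.depth ≤ d ∧ ∀ x, F.eval x = f x) :
    DQC n f ≤ d + 1 := by
  obtain ⟨F, hFd, hFf⟩ := h
  refine Nat.sInf_le ⟨d + 1, F.verifier (d + 1) 0, (F.depth_verifier _ 0).trans (by omega), ?_⟩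
  intro x
  have hT : (fun t => (F.verifier (d + 1) 0).eval (assemble n (d + 1) x t)) = F.outcome x := by
    funext t
    simpa using F.eval_verifier x t (j := 0) (by omega)
  rw [hT, ← hFf x]
  exact ⟨Formula.AWins_outcome (by omega), Formula.BWins_outcome (by omega)⟩
end
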